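/- arXiv:1212.1913 — 2 statements merged into one kernel-verified Lean document; each statement's English description precedes it below -/
import Mathlib

section
/- Let q ≥ 2 and n ≥ 1, let K be the (n+1)×(n+1) matrix whose (j,i) entry is the Krawtchouk polynomial value K_j(i) for parameters n and q, and let 𝐟 = (f(0), …, f(n)) be the vector of values of a completely monotonic function f : {0,1,…,n} → ℝ. Then the vector K^t 𝐟, i.e., the function i ↦ Σ_{k=0}^n K_k(i) f(k), is also completely monotonic on {0,1,…,n}. -/
/-!
Newton's expansion at the right endpoint writes `f` on `{0,…,n}` as
`f k = ∑ₛ C(n-k, s) · aₛ` with `aₛ = (-1)^s Δ^s f (n-s)`, and complete monotonicity of `f`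
says exactly that every `aₛ ≥ 0`. The homogeneous generating function
`∑ₖ K_k(i) z^(n-k) = (z-1)^i (z+q-1)^(n-i)`, read at `z = 1 + y`, shows that `Kᵗ` maps
`k ↦ C(n-k, s)` to `i ↦ q^(n-s) C(n-i, n-s)`. Finally `i ↦ C(n-i, r)` is completely monotonic,
because reflecting `i ↦ n-i` turns its differences into those of `x ↦ C(x, r)`, which are
binomials again by Pascal's rule; so `Kᵗ f` is a nonnegative combination of completely
monotonic functions.
-/

open Finset

/-- The Krawtchouk polynomial `K_k(x; n, q)` evaluated at a natural number `x`. -/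
noncomputable def kraw (n q k x : ℕ) : ℝ :=
  ∑ j ∈ Finset.range (k+1),
    (-1 : ℝ)^j * ((q : ℝ) - 1)^(k-j) * (x.choose j : ℝ) * ((n-x).choose (k-j) : ℝ)

/-- The finite difference operator `Δf(m) = f(m+1) − f(m)`. -/
def fdiff (f : ℕ → ℝ) : ℕ → ℝ := fun m => f (m+1) - f m

/-- `f` is completely monotonic on `{a, a+1, …, b}`:
`(−1)^k Δ^k f(i) ≥ 0` whenever `k ≥ 0` and `a ≤ i ≤ b − k`. -/
def CompletelyMonotonicOn (f : ℕ → ℝ) (a b : ℕ) : Prop :=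
  ∀ k i, a ≤ i → i + k ≤ b → 0 ≤ (-1 : ℝ)^k * (fdiff^[k] f) i

open fwdDiff

lemma fdiff_eq_fwdDiff : fdiff = Δ_[1] := rfl

lemma fdiff_iter_congr {f g : ℕ → ℝ} {m i : ℕ}
    (hfg : ∀ x, i ≤ x → x ≤ i + m → f x = g x) :
    fdiff^[m] f i = fdiff^[m] g i := by
  simp only [fdiff_eq_fwdDiff, fwdDiff_iter_eq_sum_shift, smul_eq_mul, mul_one]
  refine sum_congr rfl fun k hk => ?_
  rw [hfg _ (by omega) (by simp at hk; omega)]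

namespace CompletelyMonotonicOn

lemma congr {f g : ℕ → ℝ} {a b : ℕ} (hf : CompletelyMonotonicOn f a b)
    (hfg : ∀ x, a ≤ x → x ≤ b → f x = g x) : CompletelyMonotonicOn g a b :=
    fun k i hi hik => by
  rw [← fdiff_iter_congr fun x hix hxk => hfg x (by omega) (by omega)]
  exact hf k i hi hik

lemma sum_mul {ι : Type*} {t : Finset ι} {c : ι → ℝ} {g : ι → ℕ → ℝ} {a b : ℕ}
    (hc : ∀ s ∈ t, 0 ≤ c s) (hg : ∀ s ∈ t, CompletelyMonotonicOn (g s) a b) :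
    CompletelyMonotonicOn (fun x => ∑ s ∈ t, c s * g s x) a b := fun k i hi hik => by
  have hsum : (fun x => ∑ s ∈ t, c s * g s x) = ∑ s ∈ t, c s • g s := by
    ext x; simp
  rw [hsum, fdiff_eq_fwdDiff, fwdDiff_iter_finsetSum, Finset.sum_apply, mul_sum]
  refine sum_nonneg fun s hs => ?_
  rw [fwdDiff_iter_const_smul, Pi.smul_apply, smul_eq_mul, mul_left_comm]
  exact mul_nonneg (hc s hs) (hg s hs k i hi hik)

end CompletelyMonotonicOn

lemma fdiff_iter_comp_sub (f : ℕ → ℝ) {n s j : ℕ} (h : j + s ≤ n) :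
    fdiff^[s] (fun x => f (n - x)) j = (-1) ^ s * fdiff^[s] f (n - j - s) := by
  induction s generalizing j with
  | zero => simp
  | succ s ih =>
    rw [Function.iterate_succ_apply', fdiff, ih (by omega), ih (by omega),
      show n - j - s = n - j - (s + 1) + 1 by omega,
      show n - (j + 1) - s = n - j - (s + 1) by omega,
      Function.iterate_succ_apply', fdiff]
    ring

lemma eq_sum_choose_mul_fdiff_iter (f : ℕ → ℝ) {n k : ℕ} (hk : k ≤ n) :
    f k = ∑ s ∈ range (n + 1), ((n - k).choose s : ℝ) * ((-1) ^ s * fdiff^[s] f (n - s)) := by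
  have hnewton := shift_eq_sum_fwdDiff_iter 1 (fun x => f (n - x)) (n - k) 0
  simp only [zero_add, smul_eq_mul, mul_one, nsmul_eq_mul, Nat.sub_sub_self hk] at hnewton
  rw [hnewton, ← fdiff_eq_fwdDiff]
  refine sum_subset (range_subset_range.2 (by omega)) (fun s _ hs => ?_) |>.trans
    (sum_congr rfl fun s hs => ?_)
  · rw [Nat.choose_eq_zero_of_lt (by simpa using hs), Nat.cast_zero, zero_mul]
  · rw [fdiff_iter_comp_sub f (by simp at hs; omega), Nat.sub_zero]

lemma fdiff_iter_choose_nonneg (m r y : ℕ) : 0 ≤ fdiff^[m] (fun x => (x.choose r : ℝ)) y := by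
  induction m generalizing r with
  | zero => simp
  | succ m ih =>
    rw [Function.iterate_succ_apply]
    cases r with
    | zero => simp [fdiff_eq_fwdDiff, fwdDiff_iter_eq_sum_shift]
    | succ r =>
      have hpascal : fdiff (fun x => (x.choose (r + 1) : ℝ)) = fun x => (x.choose r : ℝ) := by
        ext x; simp [fdiff, Nat.choose_succ_succ']
      exact hpascal ▸ ih r

lemma completelyMonotonicOn_choose_sub (a n r : ℕ) :
    CompletelyMonotonicOn (fun x => ((n - x).choose r : ℝ)) a n := fun m i _ him => by
  rw [fdiff_iter_comp_sub (fun x => (x.choose r : ℝ)) him, ← mul_assoc, ← pow_add,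
    Even.neg_one_pow ⟨m, rfl⟩, one_mul]
  exact fdiff_iter_choose_nonneg m r _

lemma sum_kraw_smul_pow {R : Type*} [CommRing R] [Algebra ℝ R] (q : ℕ) {n i : ℕ}
    (hi : i ≤ n) (z : R) :
    ∑ k ∈ range (n + 1), kraw n q k i • z ^ (n - k) =
      (z - 1) ^ i * (z + ((q : R) - 1)) ^ (n - i) := by
  set T : ℕ → ℕ → R := fun j l =>
    ((-1 : ℝ) ^ j * ((q : ℝ) - 1) ^ l * (i.choose j : ℝ) * ((n - i).choose l : ℝ)) •
      z ^ (n - (j + l))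
  have hT : ∀ j l, i < j ∨ n - i < l → T j l = 0 := by
    rintro j l (hj | hl)
    · simp [T, Nat.choose_eq_zero_of_lt hj]
    · simp [T, Nat.choose_eq_zero_of_lt hl]
  calc ∑ k ∈ range (n + 1), kraw n q k i • z ^ (n - k)
      = ∑ k ∈ range (n + 1), ∑ j ∈ range (k + 1), T j (k - j) := by
        refine sum_congr rfl fun k _ => ?_
        rw [kraw, sum_smul]
        refine sum_congr rfl fun j hj => ?_
        simp only [T, Nat.add_sub_cancel' (by simpa [Nat.lt_succ_iff] using hj : j ≤ k)]
    _ = ∑ j ∈ range (n + 1), ∑ l ∈ range (n + 1 - j), T j l := sum_range_diag_flip _ _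
    _ = ∑ j ∈ range (i + 1), ∑ l ∈ range (n - i + 1), T j l := by
        refine (sum_subset (range_subset_range.2 (by omega)) fun j _ hj => ?_).symm.trans
          (sum_congr rfl fun j hj => ?_)
        · exact sum_eq_zero fun l _ => hT j l (.inl (by simpa using hj))
        · refine (sum_subset (range_subset_range.2 (by simp at hj; omega)) fun l _ hl => ?_).symm
          exact hT j l (.inr (by simpa using hl))
    _ = (∑ j ∈ range (i + 1), (-1) ^ j * z ^ (i - j) * i.choose j) *
          ∑ l ∈ range (n - i + 1), ((q : R) - 1) ^ l * z ^ (n - i - l) * (n - i).choose l := by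
        rw [sum_mul_sum]
        refine sum_congr rfl fun j hj => sum_congr rfl fun l hl => ?_
        simp only [mem_range] at hj hl
        simp only [T, show n - (j + l) = (i - j) + (n - i - l) by omega, pow_add, Algebra.smul_def,
          map_mul, map_pow, map_neg, map_one, map_sub, map_natCast]
        ring
    _ = (z - 1) ^ i * (z + ((q : R) - 1)) ^ (n - i) := by
        rw [← add_pow, ← add_pow]; ring

open Polynomial in
lemma sum_kraw_mul_choose (q : ℕ) {n i s : ℕ} (hi : i ≤ n) (hs : s ≤ n) :
    ∑ k ∈ range (n + 1), kraw n q k i * ((n - k).choose s : ℝ) =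
      (q : ℝ) ^ (n - s) * ((n - i).choose (n - s) : ℝ) := by
  have hgen := congrArg (coeff · s) (sum_kraw_smul_pow q hi (X + C 1 : ℝ[X]))
  simp only [finsetSum_coeff, coeff_smul, coeff_X_add_C_pow, one_pow, one_mul,
    smul_eq_mul] at hgen
  rw [hgen, show (X + C 1 - 1 : ℝ[X]) = X by simp,
    show (X + C 1 + ((q : ℝ[X]) - 1)) = X + C (q : ℝ) by simp, coeff_X_pow_mul']
  split_ifs with his
  · rw [coeff_X_add_C_pow, show n - i - (s - i) = n - s by omega,
      ← Nat.choose_symm (by omega), show n - i - (s - i) = n - s by omega]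
  · rw [Nat.choose_eq_zero_of_lt (by omega), Nat.cast_zero, mul_zero]

lemma sum_kraw_mul_eq_sum_choose (q : ℕ) (f : ℕ → ℝ) {n i : ℕ} (hi : i ≤ n) :
    ∑ k ∈ range (n + 1), kraw n q k i * f k =
      ∑ s ∈ range (n + 1),
        (q : ℝ) ^ (n - s) * ((-1) ^ s * fdiff^[s] f (n - s)) *
          ((n - i).choose (n - s) : ℝ) := by
  have hnewton : ∀ k ∈ range (n + 1), kraw n q k i * f k = ∑ s ∈ range (n + 1),
      kraw n q k i * ((n - k).choose s : ℝ) * ((-1) ^ s * fdiff^[s] f (n - s)) := fun k hk => by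
    rw [eq_sum_choose_mul_fdiff_iter f (by simpa [Nat.lt_succ_iff] using hk), mul_sum]
    simp only [mul_assoc]
  rw [sum_congr rfl hnewton, sum_comm]
  refine sum_congr rfl fun s hs => ?_
  rw [← sum_mul, sum_kraw_mul_choose q hi (by simpa [Nat.lt_succ_iff] using hs)]
  ring

theorem krawtchouk_transpose_completelyMonotonic_general {q n : ℕ}
    (f : ℕ → ℝ) (hf : CompletelyMonotonicOn f 0 n) :
    CompletelyMonotonicOn (fun i => ∑ k ∈ Finset.range (n+1), kraw n q k i * f k) 0 n := by
  have hcoeff : ∀ s ∈ range (n + 1),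
      0 ≤ (q : ℝ) ^ (n - s) * ((-1) ^ s * fdiff^[s] f (n - s)) :=
    fun s hs => mul_nonneg (by positivity) (hf s (n - s) (Nat.zero_le _) (by simp at hs; omega))
  have hcombination := CompletelyMonotonicOn.sum_mul hcoeff fun s _ =>
    completelyMonotonicOn_choose_sub 0 n (n - s)
  exact hcombination.congr fun i _ hi => (sum_kraw_mul_eq_sum_choose q f hi).symm

/-- Lemma 3.5: if `f` is completely monotonic on `{0,…,n}`,
then so is `Kᵗ f`, i.e. the function `i ↦ ∑_{k=0}^n K_k(i) f(k)`. -/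
theorem krawtchouk_transpose_completelyMonotonic {q n : ℕ} (hq : 2 ≤ q) (hn : 1 ≤ n)
    (f : ℕ → ℝ) (hf : CompletelyMonotonicOn f 0 n) :
    CompletelyMonotonicOn (fun i => ∑ k ∈ Finset.range (n+1), kraw n q k i * f k) 0 n :=
  krawtchouk_transpose_completelyMonotonic_general f hf
end

section
/- Let q ≥ 2, n ≥ 1, and a ∈ ℝ. The function h : {0,1,…,n} → ℝ given by h(x) = a − x is positive definite with respect to the Krawtchouk expansion for parameters n and q if and only if a ≥ (q−1)n/q. -/
open Finset

/-- A quasicode of length `n` and size `N` over an alphabet of size `q`,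
recorded via its entries `A 0, …, A n`. -/
structure IsQuasicode (q n : ℕ) (N : ℝ) (A : ℕ → ℝ) : Prop where
  nonneg : ∀ i, i ≤ n → 0 ≤ A i
  delsarte : ∀ j, j ≤ n → 0 ≤ ∑ i ∈ Finset.range (n+1), A i * kraw n q j i
  size : ∑ i ∈ Finset.range (n+1), A i = N
  zeroth : A 0 = 1

/-- A universally optimal quasicode: a quasicode that minimizes `f`-energy
among all quasicodes of the same length and size, for every completely
monotonic potential function `f`. -/
def IsUOQuasicode (q n : ℕ) (N : ℝ) (A : ℕ → ℝ) : Prop :=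
  IsQuasicode q n N A ∧
    ∀ f : ℕ → ℝ, CompletelyMonotonicOn f 0 n →
      ∀ B : ℕ → ℝ, IsQuasicode q n N B →
        ∑ i ∈ Finset.range (n+1), f i * A i ≤ ∑ i ∈ Finset.range (n+1), f i * B i

/-- The quasicode `A` (of size `N`) is a `t`-design: `A^⊥_j = 0` for `1 ≤ j ≤ t`. -/
def IsDesign (q n t : ℕ) (A : ℕ → ℝ) : Prop :=
  ∀ j, 1 ≤ j → j ≤ t → ∑ i ∈ Finset.range (n+1), A i * kraw n q j i = 0

/-- `h : {0,…,n} → ℝ` is positive definite: its (unique) Krawtchouk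
coefficients are all nonnegative. -/
def PositiveDefinite (q n : ℕ) (h : ℕ → ℝ) : Prop :=
  ∃ c : ℕ → ℝ, (∀ j, j ≤ n → 0 ≤ c j) ∧
    ∀ i, i ≤ n → h i = ∑ j ∈ Finset.range (n+1), c j * kraw n q j i

open scoped Classical in
/-- The support of a quasicode: `{i > 0 : A i ≠ 0}`. -/
noncomputable def supp (n : ℕ) (A : ℕ → ℝ) : Finset ℕ :=
  (Finset.Icc 1 n).filter (fun i => A i ≠ 0)

/-!
`K_k(x)` is the coefficient of `z^k` in `(1 - z)^x (1 + (q-1)z)^(n-x)`. Weighting by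
`C(n,x) (q-1)^x` and summing over `x`, the binomial theorem collapses the generating functions to
`((q-1)(1-z) + 1 + (q-1)z)^n = q^n`, so `∑ₓ C(n,x) (q-1)^x K_k(x) = q^n [k = 0]`. Hence the
zeroth Krawtchouk coefficient of any `h` is `q^(-n) ∑ₓ C(n,x) (q-1)^x h(x)`. Since
`a - x = (a - (q-1)n/q) K_0(x) + K_1(x)/q`, every expansion of `a - x` has zeroth coefficient
`a - (q-1)n/q`, and this explicit one has all its other coefficients nonnegative.
-/

open Polynomial

lemma coeff_one_add_C_mul_X_pow {R : Type*} [CommSemiring R] (r : R) (m l : ℕ) :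
    ((1 + C r * X) ^ m).coeff l = r ^ l * m.choose l := by
  simp_rw [add_comm (1 : R[X]), add_pow, one_pow, mul_one, mul_pow, ← C_pow, finsetSum_coeff,
    coeff_mul_natCast, coeff_C_mul_X_pow]
  rw [Finset.sum_eq_single l]
  · simp
  · intro b _ hb
    simp [Ne.symm hb]
  · intro hl
    simp [Nat.choose_eq_zero_of_lt (by simpa using hl : m < l)]

lemma kraw_eq_coeff (n q k x : ℕ) :
    kraw n q k x = ((1 + C (-1) * X) ^ x * (1 + C ((q : ℝ) - 1) * X) ^ (n - x)).coeff k := by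
  rw [coeff_mul, Finset.Nat.sum_antidiagonal_eq_sum_range_succ_mk, kraw]
  refine Finset.sum_congr rfl fun j _ => ?_
  simp only [coeff_one_add_C_mul_X_pow]
  ring

lemma sum_choose_mul_pow_mul_kraw (n q k : ℕ) :
    ∑ i ∈ range (n + 1), (n.choose i : ℝ) * ((q : ℝ) - 1) ^ i * kraw n q k i =
      if k = 0 then (q : ℝ) ^ n else 0 := by
  set r : ℝ := (q : ℝ) - 1
  have hsum : C r * (1 + C (-1) * X) + (1 + C r * X) = C (q : ℝ) := by
    simp only [r, C_neg, C_1, C_sub]; ring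
  rw [← coeff_C, C_pow, ← hsum, add_pow, finsetSum_coeff]
  refine Finset.sum_congr rfl fun i _ => ?_
  rw [kraw_eq_coeff, mul_pow, ← C_pow, coeff_mul_natCast, mul_assoc (C _), coeff_C_mul]
  ring

lemma kraw_zero (n q x : ℕ) : kraw n q 0 x = 1 := by
  simp [kraw]

lemma kraw_one {n x : ℕ} (q : ℕ) (hx : x ≤ n) : kraw n q 1 x = ((q : ℝ) - 1) * n - q * x := by
  simp only [kraw, Nat.reduceAdd, sum_range_succ, range_one, sum_singleton, pow_zero, tsub_zero,
    pow_one, one_mul, Nat.choose_zero_right, Nat.cast_one, mul_one, Nat.choose_one_right,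
    Nat.cast_sub hx, tsub_self, neg_mul]
  ring

lemma kraw_eq_zero_of_lt {n k x : ℕ} (q : ℕ) (hk : n < k) (hx : x ≤ n) : kraw n q k x = 0 := by
  refine Finset.sum_eq_zero fun j _ => ?_
  rcases le_or_gt j x with hj | hj
  · rw [Nat.choose_eq_zero_of_lt (by omega : n - x < k - j)]; simp
  · rw [Nat.choose_eq_zero_of_lt hj]; simp

lemma sum_single_mul_kraw {n x : ℕ} (q j : ℕ) (c : ℝ) (hx : x ≤ n) :
    ∑ k ∈ range (n + 1), (Pi.single j c : ℕ → ℝ) k * kraw n q k x = c * kraw n q j x := by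
  simp only [Pi.single_apply, ite_mul, zero_mul, Finset.sum_ite_eq', Finset.mem_range]
  split_ifs with hj
  · rfl
  · rw [kraw_eq_zero_of_lt q (by omega) hx, mul_zero]

lemma kraw_expansion_coeff_zero_mul_pow {q n : ℕ} {h c : ℕ → ℝ}
    (hc : ∀ i, i ≤ n → h i = ∑ j ∈ range (n + 1), c j * kraw n q j i) :
    c 0 * (q : ℝ) ^ n = ∑ i ∈ range (n + 1), (n.choose i : ℝ) * ((q : ℝ) - 1) ^ i * h i := by
  calc c 0 * (q : ℝ) ^ n
      = ∑ j ∈ range (n + 1), c j * ∑ i ∈ range (n + 1),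
          (n.choose i : ℝ) * ((q : ℝ) - 1) ^ i * kraw n q j i := by
        simp [sum_choose_mul_pow_mul_kraw]
    _ = ∑ i ∈ range (n + 1), (n.choose i : ℝ) * ((q : ℝ) - 1) ^ i * h i := by
        simp_rw [Finset.mul_sum]
        rw [Finset.sum_comm]
        refine Finset.sum_congr rfl fun i hi => ?_
        rw [hc i (by simpa [Nat.lt_succ_iff] using hi), Finset.mul_sum]
        exact Finset.sum_congr rfl fun j _ => by ring

noncomputable def linearKrawCoeff (q n : ℕ) (a : ℝ) : ℕ → ℝ :=
  Pi.single 0 (a - ((q : ℝ) - 1) * n / q) + Pi.single 1 (q : ℝ)⁻¹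

lemma sub_eq_sum_linearKrawCoeff_mul_kraw {q n x : ℕ} (hq : q ≠ 0) (a : ℝ) (hx : x ≤ n) :
    a - x = ∑ j ∈ range (n + 1), linearKrawCoeff q n a j * kraw n q j x := by
  simp only [linearKrawCoeff, Pi.add_apply, add_mul, Finset.sum_add_distrib,
    sum_single_mul_kraw q _ _ hx, kraw_zero, kraw_one q hx]
  field_simp
  ring

theorem linear_positiveDefinite_iff_general {q n : ℕ} (hq : 2 ≤ q) (a : ℝ) :
    PositiveDefinite q n (fun x => a - (x : ℝ)) ↔ ((q : ℝ) - 1) * n / q ≤ a := by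
  have hq0 : q ≠ 0 := by omega
  have hexp := fun i (hi : i ≤ n) => sub_eq_sum_linearKrawCoeff_mul_kraw hq0 a hi
  constructor
  · rintro ⟨c, hc, hrep⟩
    have hc0 : c 0 = a - ((q : ℝ) - 1) * n / q := by
      have := (kraw_expansion_coeff_zero_mul_pow hrep).trans (kraw_expansion_coeff_zero_mul_pow hexp).symm
      simpa [linearKrawCoeff, hq0] using this
    linarith [hc 0 n.zero_le]
  · intro ha
    refine ⟨linearKrawCoeff q n a, fun j _ => ?_, hexp⟩
    rcases j with _ | _ | j <;> simp [linearKrawCoeff, ha]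

/-- Lemma 4.3: `h(x) = a − x` is positive definite
iff `a ≥ (q−1)n/q`. -/
theorem linear_positiveDefinite_iff {q n : ℕ} (hq : 2 ≤ q) (hn : 1 ≤ n) (a : ℝ) :
    PositiveDefinite q n (fun x => a - (x : ℝ)) ↔ ((q : ℝ) - 1) * n / q ≤ a :=
  linear_positiveDefinite_iff_general hq a
end
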